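/- arXiv:2108.06176 — 7 statements merged into one kernel-verified Lean document; each statement's English description precedes it below -/
import Mathlib

section
/- Let γ > 0 and fix u₀, ρ₀, a₀ > 0. Suppose (u(x), ρ(x), a(x)) is a smooth solution on an interval with u, ρ, a > 0 satisfying (aρu)' = 0 and (aρu(u+ρ^γ))' = ρuρ^γ a'. Then along the solution the quantity u^{γ/(1+γ)}(ρ^γ + (γ/(1+2γ))u) is constant. -/
/-!
Write `P = ρ^γ`. Mass conservation `(aρu)' = 0` turns the momentum equation into
`a (u' + P') = P a'`, and eliminating `a'/a = -(ρ'/ρ + u'/u)` leaves the relation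
`(1 + γ) u P' = -γ u' (u + P)` between velocity and pressure alone. Along it the derivative of
`u^k (P + c u)`, with `k = γ/(1+γ)` and `c = γ/(1+2γ)`, is `u^k u' (k c - k + c) = 0`.
-/

open Real Set

noncomputable def stationaryInvariant (γ : ℝ) (u ρ : ℝ → ℝ) (x : ℝ) : ℝ :=
  u x ^ (γ / (1 + γ)) * (ρ x ^ γ + (γ / (1 + 2 * γ)) * u x)

theorem Convex.is_const_of_hasDerivAt_interior_eq_zero {D : Set ℝ} (hD : Convex ℝ D) {f : ℝ → ℝ}
    (hf : ContinuousOn f D) (hf' : ∀ x ∈ interior D, HasDerivAt f 0 x) {x y : ℝ}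
    (hx : x ∈ D) (hy : y ∈ D) : f x = f y := by
  have hdiff : DifferentiableOn ℝ f (interior D) :=
    fun z hz => (hf' z hz).differentiableAt.differentiableWithinAt
  have hmono := monotoneOn_of_deriv_nonneg hD hf hdiff fun z hz => (hf' z hz).deriv.ge
  have hanti := antitoneOn_of_deriv_nonpos hD hf hdiff fun z hz => (hf' z hz).deriv.le
  rcases le_total x y with hxy | hyx
  · exact le_antisymm (hmono hx hy hxy) (hanti hx hy hxy)
  · exact le_antisymm (hanti hy hx hyx) (hmono hy hx hyx)

/-- Pointwise form: `a', ρ', u', P'` are the derivatives of `a, ρ, u` and the pressure `P`. -/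
theorem momentum_balance_of_mass_conservation {a ρ u P a' ρ' u' P' : ℝ} (ha : a ≠ 0)
    (hmass : (a' * ρ + a * ρ') * u + a * ρ * u' = 0)
    (hmom : ((a' * ρ + a * ρ') * u + a * ρ * u') * (u + P) + a * ρ * u * (u' + P')
      = ρ * u * P * a') :
    ρ * u * (u' + P') + P * (ρ' * u + ρ * u') = 0 := by
  apply mul_left_cancel₀ ha
  linear_combination hmom - u * hmass

theorem invariant_derivative_factor_eq_zero {γ ρ u P ρ' u' P' : ℝ} (hρ : ρ ≠ 0)
    (hγ₁ : 1 + γ ≠ 0) (hγ₂ : 1 + 2 * γ ≠ 0) (hP' : ρ * P' = γ * P * ρ')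
    (hbal : ρ * u * (u' + P') + P * (ρ' * u + ρ * u') = 0) :
    γ / (1 + γ) * u' * (P + γ / (1 + 2 * γ) * u) + u * (P' + γ / (1 + 2 * γ) * u') = 0 := by
  have hflow : (1 + γ) * u * P' = -γ * u' * (u + P) := by
    apply mul_left_cancel₀ hρ
    linear_combination γ * hbal + u * hP'
  have hc : γ / (1 + 2 * γ) * (1 + 2 * γ) = γ := div_mul_cancel₀ γ hγ₂
  have hk : γ / (1 + γ) * (1 + γ) = γ := div_mul_cancel₀ γ hγ₁
  apply mul_left_cancel₀ (mul_ne_zero hγ₁ hγ₂)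
  linear_combination (1 + 2 * γ) * hflow + (1 + 2 * γ) * u' * (P + γ / (1 + 2 * γ) * u) * hk
    + (1 + 2 * γ) * u * u' * hc

theorem hasDerivAt_stationaryInvariant {γ : ℝ} {u ρ a : ℝ → ℝ} {t : ℝ}
    (hγ₁ : 1 + γ ≠ 0) (hγ₂ : 1 + 2 * γ ≠ 0) (hu : 0 < u t) (hρ : 0 < ρ t) (ha : a t ≠ 0)
    (hud : DifferentiableAt ℝ u t) (hρd : DifferentiableAt ℝ ρ t) (had : DifferentiableAt ℝ a t)
    (hmass : deriv (fun y => a y * ρ y * u y) t = 0)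
    (hmom : deriv (fun y => a y * ρ y * u y * (u y + ρ y ^ γ)) t
      = ρ t * u t * ρ t ^ γ * deriv a t) :
    HasDerivAt (stationaryInvariant γ u ρ) 0 t := by
  have hP : HasDerivAt (fun y => ρ y ^ γ) (deriv ρ t * γ * ρ t ^ (γ - 1)) t :=
    hρd.hasDerivAt.rpow_const (Or.inl hρ.ne')
  have hflux : HasDerivAt (fun y => a y * ρ y * u y)
      ((deriv a t * ρ t + a t * deriv ρ t) * u t + a t * ρ t * deriv u t) t :=
    (had.hasDerivAt.mul hρd.hasDerivAt).mul hud.hasDerivAt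
  rw [hflux.deriv] at hmass
  have hmomflux : HasDerivAt (fun y => a y * ρ y * u y * (u y + ρ y ^ γ))
      (((deriv a t * ρ t + a t * deriv ρ t) * u t + a t * ρ t * deriv u t) * (u t + ρ t ^ γ)
        + a t * ρ t * u t * (deriv u t + deriv ρ t * γ * ρ t ^ (γ - 1))) t :=
    hflux.mul (hud.hasDerivAt.add hP)
  rw [hmomflux.deriv] at hmom
  have hP' : ρ t * (deriv ρ t * γ * ρ t ^ (γ - 1)) = γ * ρ t ^ γ * deriv ρ t := by
    rw [rpow_sub_one hρ.ne']
    field_simp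
  have hfactor := invariant_derivative_factor_eq_zero hρ.ne' hγ₁ hγ₂ hP'
    (momentum_balance_of_mass_conservation ha hmass hmom)
  have hQ : HasDerivAt (stationaryInvariant γ u ρ)
      (deriv u t * (γ / (1 + γ)) * u t ^ (γ / (1 + γ) - 1) * (ρ t ^ γ + γ / (1 + 2 * γ) * u t)
        + u t ^ (γ / (1 + γ)) * (deriv ρ t * γ * ρ t ^ (γ - 1) + γ / (1 + 2 * γ) * deriv u t)) t :=
    (hud.hasDerivAt.rpow_const (Or.inl hu.ne')).mul
      (hP.add (hud.hasDerivAt.const_mul (γ / (1 + 2 * γ))))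
  refine hQ.congr_deriv ?_
  have hu_pow : u t ^ (γ / (1 + γ)) / u t * u t = u t ^ (γ / (1 + γ)) := div_mul_cancel₀ _ hu.ne'
  rw [rpow_sub_one hu.ne']
  linear_combination u t ^ (γ / (1 + γ)) / u t * hfactor
    - (deriv ρ t * γ * ρ t ^ (γ - 1) + γ / (1 + 2 * γ) * deriv u t) * hu_pow

/-- Along smooth positive stationary solutions of (aρu)' = 0 and
(aρu(u+ρ^γ))' = ρuρ^γ a', the quantity u^{γ/(1+γ)}(ρ^γ + (γ/(1+2γ))u)
is constant. -/
theorem stmt_2 (γ : ℝ) (hγ : 0 < γ) (I : Set ℝ) (hI : Convex ℝ I)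
    (u ρ a : ℝ → ℝ)
    (hu : ∀ x ∈ I, 0 < u x) (hρ : ∀ x ∈ I, 0 < ρ x) (ha : ∀ x ∈ I, 0 < a x)
    (hus : ContDiffOn ℝ 1 u I) (hρs : ContDiffOn ℝ 1 ρ I)
    (has : ContDiffOn ℝ 1 a I)
    (h1 : ∀ x ∈ I, deriv (fun y => a y * ρ y * u y) x = 0)
    (h2 : ∀ x ∈ I, deriv (fun y => a y * ρ y * u y * (u y + ρ y ^ γ)) x
        = ρ x * u x * ρ x ^ γ * deriv a x) :
    ∀ x ∈ I, ∀ y ∈ I,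
      u x ^ (γ / (1 + γ)) * (ρ x ^ γ + (γ / (1 + 2 * γ)) * u x)
        = u y ^ (γ / (1 + γ)) * (ρ y ^ γ + (γ / (1 + 2 * γ)) * u y) := by
  have hcont : ContinuousOn (stationaryInvariant γ u ρ) I :=
    (hus.continuousOn.rpow_const fun t ht => Or.inl (hu t ht).ne').mul
      ((hρs.continuousOn.rpow_const fun t ht => Or.inl (hρ t ht).ne').add
        (continuousOn_const.mul hus.continuousOn))
  have hderiv (t : ℝ) (ht : t ∈ interior I) : HasDerivAt (stationaryInvariant γ u ρ) 0 t := by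
    have htI : t ∈ I := interior_subset ht
    have hI_nhds : I ∈ nhds t := mem_interior_iff_mem_nhds.mp ht
    exact hasDerivAt_stationaryInvariant (by positivity) (by positivity) (hu t htI) (hρ t htI)
      (ha t htI).ne' ((hus.differentiableOn one_ne_zero t htI).differentiableAt hI_nhds)
      ((hρs.differentiableOn one_ne_zero t htI).differentiableAt hI_nhds)
      ((has.differentiableOn one_ne_zero t htI).differentiableAt hI_nhds) (h1 t htI) (h2 t htI)
  intro x hx y hy
  exact hI.is_const_of_hasDerivAt_interior_eq_zero hcont hderiv hx hy
end

section
/- Let γ > 0 and let u₀, ρ₀, a₀, a > 0 with k₀ = (a₀ρ₀u₀/a)^{γ/(1+γ)}, k₁ = u₀^{γ/(1+γ)}(ρ₀^γ + (γ/(1+2γ))u₀), k₂ = (γ/(1+2γ))(a₀ρ₀u₀/a)^{(1+2γ)/(1+γ)}. If ρ > 0 satisfies k₀ρ^{γ+1} - k₁ρ^{(1+2γ)/(1+γ)} + k₂ = 0 and ρ < ρ_min = (k₁(1+2γ)/(k₀(γ+1)²))^{(1+γ)/γ²}, then the corresponding velocity u = a₀ρ₀u₀/(aρ) satisfies u > γρ^γ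 (i.e., the state lies in the supersonic region D₂). -/
/-!
Write `c = a₀ρ₀u₀/a`, so that `u = c/ρ`, `k₀ = c^{γ/(1+γ)}` and `k₂ = (γ/(1+2γ)) k₀ c`, and the claim
becomes `γρ^{γ+1} < c`. Since `ρ^{γ²/(1+γ)} · ρ^{(1+2γ)/(1+γ)} = ρ^{γ+1}`, the bound `ρ < ρ_min` multiplied
by `ρ^{(1+2γ)/(1+γ)}` and combined with the root equation gives
`k₀(γ+1)²ρ^{γ+1} < (1+2γ)(k₀ρ^{γ+1} + k₂) = (1+2γ)k₀ρ^{γ+1} + γk₀c`, i.e. `γ²k₀ρ^{γ+1} < γk₀c`.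
-/

open Real

section StationaryContact

variable {γ c k₁ ρ : ℝ}

lemma rpow_one_add_two_mul_div_one_add (hγ : 1 + γ ≠ 0) (hc : c ≠ 0) :
    c ^ ((1 + 2 * γ) / (1 + γ)) = c ^ (γ / (1 + γ)) * c := by
  rw [← rpow_add_one hc]
  congr 1
  field_simp
  ring

lemma rpow_sq_div_one_add_mul_rpow (hγ : 1 + γ ≠ 0) (hρ : 0 < ρ) :
    ρ ^ (γ ^ 2 / (1 + γ)) * ρ ^ ((1 + 2 * γ) / (1 + γ)) = ρ ^ (γ + 1) := by
  rw [← rpow_add hρ]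
  congr 1
  field_simp
  ring

/-- `ρ_min` is the critical point of `ρ ↦ k₀ρ^{γ+1} - k₁ρ^{(1+2γ)/(1+γ)} + k₂`. -/
theorem mul_rpow_add_one_lt_of_root_of_lt (hγ : 0 < γ) (hc : 0 < c) (hρ : 0 < ρ)
    (hroot : c ^ (γ / (1 + γ)) * ρ ^ (γ + 1) - k₁ * ρ ^ ((1 + 2 * γ) / (1 + γ))
      + γ / (1 + 2 * γ) * c ^ ((1 + 2 * γ) / (1 + γ)) = 0)
    (hlt : ρ < (k₁ * (1 + 2 * γ) / (c ^ (γ / (1 + γ)) * (γ + 1) ^ 2)) ^ ((1 + γ) / γ ^ 2)) :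
    γ * ρ ^ (γ + 1) < c := by
  set k₀ := c ^ (γ / (1 + γ))
  set P := ρ ^ (γ ^ 2 / (1 + γ))
  set Q := ρ ^ ((1 + 2 * γ) / (1 + γ))
  set R := ρ ^ (γ + 1)
  have hk₀ : 0 < k₀ := rpow_pos_of_pos hc _
  have hQ : 0 < Q := rpow_pos_of_pos hρ _
  have hR : 0 < R := rpow_pos_of_pos hρ _
  have hγ' : 1 + γ ≠ 0 := by positivity
  have hPQ : P * Q = R := rpow_sq_div_one_add_mul_rpow hγ' hρ
  have hroot' : k₁ * Q = k₀ * R + γ / (1 + 2 * γ) * (k₀ * c) := by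
    rw [rpow_one_add_two_mul_div_one_add hγ' hc.ne'] at hroot
    linarith
  -- the base of `ρ_min` must be nonnegative for `rpow` to invert the bound
  have hk₁ : 0 < k₁ := by
    refine pos_of_mul_pos_left (hroot' ▸ ?_) hQ.le
    positivity
  have hP : P < k₁ * (1 + 2 * γ) / (k₀ * (γ + 1) ^ 2) := by
    rwa [← inv_div (γ ^ 2), lt_rpow_inv_iff_of_pos hρ.le (by positivity) (by positivity)] at hlt
  have key : k₀ * (γ + 1) ^ 2 * R < (1 + 2 * γ) * k₀ * R + γ * (k₀ * c) :=
    calc k₀ * (γ + 1) ^ 2 * R = k₀ * (γ + 1) ^ 2 * P * Q := by rw [← hPQ]; ring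
      _ < k₁ * (1 + 2 * γ) * Q := by
        rw [lt_div_iff₀ (by positivity), mul_comm] at hP
        exact mul_lt_mul_of_pos_right hP hQ
      _ = (1 + 2 * γ) * k₀ * R + γ * (k₀ * c) := by
        rw [mul_right_comm, hroot']
        field_simp
  have hscaled : γ * k₀ * (γ * R) < γ * k₀ * c := by nlinarith
  exact lt_of_mul_lt_mul_left hscaled (by positivity)

end StationaryContact

theorem stmt_7_general (γ u₀ ρ₀ a₀ a : ℝ) (hγ : 0 < γ)
    (hu₀ : 0 < u₀) (hρ₀ : 0 < ρ₀) (ha₀ : 0 < a₀) (ha : 0 < a)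
    (k₀ k₁ k₂ : ℝ)
    (hk₀ : k₀ = (a₀ * ρ₀ * u₀ / a) ^ (γ / (1 + γ)))
    (hk₂ : k₂ = (γ / (1 + 2 * γ)) * (a₀ * ρ₀ * u₀ / a) ^ ((1 + 2 * γ) / (1 + γ)))
    (ρ : ℝ) (hρ : 0 < ρ)
    (hroot : k₀ * ρ ^ (γ + 1) - k₁ * ρ ^ ((1 + 2 * γ) / (1 + γ)) + k₂ = 0)
    (hlt : ρ < (k₁ * (1 + 2 * γ) / (k₀ * (γ + 1) ^ 2)) ^ ((1 + γ) / γ ^ 2))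
    (u : ℝ) (hu : u = a₀ * ρ₀ * u₀ / (a * ρ)) :
    γ * ρ ^ γ < u := by
  subst hk₀ hk₂ hu
  have hc : 0 < a₀ * ρ₀ * u₀ / a := by positivity
  have h := mul_rpow_add_one_lt_of_root_of_lt hγ hc hρ hroot hlt
  rwa [← div_div, lt_div_iff₀ hρ, mul_assoc, ← rpow_add_one hρ.ne']

/-- A root ρ of the stationary-contact equation with ρ < ρ_min gives a state in
the supersonic region D₂: the velocity u = a₀ρ₀u₀/(aρ) satisfies u > γρ^γ. -/
theorem stmt_7 (γ u₀ ρ₀ a₀ a : ℝ) (hγ : 0 < γ)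
    (hu₀ : 0 < u₀) (hρ₀ : 0 < ρ₀) (ha₀ : 0 < a₀) (ha : 0 < a)
    (k₀ k₁ k₂ : ℝ)
    (hk₀ : k₀ = (a₀ * ρ₀ * u₀ / a) ^ (γ / (1 + γ)))
    (hk₁ : k₁ = u₀ ^ (γ / (1 + γ)) * (ρ₀ ^ γ + (γ / (1 + 2 * γ)) * u₀))
    (hk₂ : k₂ = (γ / (1 + 2 * γ)) * (a₀ * ρ₀ * u₀ / a) ^ ((1 + 2 * γ) / (1 + γ)))
    (ρ : ℝ) (hρ : 0 < ρ)
    (hroot : k₀ * ρ ^ (γ + 1) - k₁ * ρ ^ ((1 + 2 * γ) / (1 + γ)) + k₂ = 0)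
    (hlt : ρ < (k₁ * (1 + 2 * γ) / (k₀ * (γ + 1) ^ 2)) ^ ((1 + γ) / γ ^ 2))
    (u : ℝ) (hu : u = a₀ * ρ₀ * u₀ / (a * ρ)) :
    γ * ρ ^ γ < u :=
  stmt_7_general γ u₀ ρ₀ a₀ a hγ hu₀ hρ₀ ha₀ ha k₀ k₁ k₂ hk₀ hk₂ ρ hρ hroot hlt u hu
end

section
/- Under the same stationary-contact setup, if ρ > ρ_min is a root of F(ρ) = 0, then the corresponding velocity u = a₀ρ₀u₀/(aρ) satisfies u < γρ^γ (i.e., the state lies in the subsonic region D₁). -/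
/-!
With `c = a₀ρ₀u₀/a` we have `k₀ = c^{γ/(1+γ)}` and `k₂ = γ/(1+2γ) · k₀ c`, and the velocity is
`u = c/ρ`, so the claim is `c < γρ^{γ+1}`. Raised to the power `γ²/(1+γ)` and multiplied by
`k₀(γ+1)²ρ^{(1+2γ)/(1+γ)}`, the hypothesis `ρ > ρ_min` reads
`(1+2γ) k₁ρ^{(1+2γ)/(1+γ)} < (γ+1)² k₀ρ^{γ+1}`. Substituting `k₁ρ^{(1+2γ)/(1+γ)} = k₀ρ^{γ+1} + k₂`
from `F(ρ) = 0` and using `(γ+1)² - (1+2γ) = γ²` leaves `γ k₀ c < γ² k₀ ρ^{γ+1}`.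
-/

open Real

section StationaryContact

variable {γ : ℝ}

lemma rpow_sq_div_mul_rpow {ρ : ℝ} (hρ : 0 < ρ) (hγ : 1 + γ ≠ 0) :
    ρ ^ (γ ^ 2 / (1 + γ)) * ρ ^ ((1 + 2 * γ) / (1 + γ)) = ρ ^ (γ + 1) := by
  rw [← rpow_add hρ]
  congr 1
  field_simp
  ring

lemma rpow_one_add_two_mul_div {c : ℝ} (hc : 0 < c) (hγ : 1 + γ ≠ 0) :
    c ^ ((1 + 2 * γ) / (1 + γ)) = c ^ (γ / (1 + γ)) * c := by
  rw [← rpow_add_one hc.ne']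
  congr 1
  field_simp
  ring

lemma mul_rpow_lt_of_rhoMin_lt {k₀ k₁ ρ : ℝ} (hγ : 0 < γ) (hρ : 0 < ρ) (hk₀ : 0 < k₀)
    (hk₁ : 0 < k₁)
    (hgt : (k₁ * (1 + 2 * γ) / (k₀ * (γ + 1) ^ 2)) ^ ((1 + γ) / γ ^ 2) < ρ) :
    (1 + 2 * γ) * k₁ * ρ ^ ((1 + 2 * γ) / (1 + γ)) < (γ + 1) ^ 2 * k₀ * ρ ^ (γ + 1) := by
  have hlt : k₁ * (1 + 2 * γ) / (k₀ * (γ + 1) ^ 2) < ρ ^ (γ ^ 2 / (1 + γ)) := by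
    rwa [← inv_div (γ ^ 2), rpow_inv_lt_iff_of_pos (by positivity) hρ.le (by positivity)] at hgt
  rw [div_lt_iff₀ (by positivity)] at hlt
  rw [← rpow_sq_div_mul_rpow hρ (by positivity)]
  calc (1 + 2 * γ) * k₁ * ρ ^ ((1 + 2 * γ) / (1 + γ))
      = k₁ * (1 + 2 * γ) * ρ ^ ((1 + 2 * γ) / (1 + γ)) := by ring
    _ < ρ ^ (γ ^ 2 / (1 + γ)) * (k₀ * (γ + 1) ^ 2) * ρ ^ ((1 + 2 * γ) / (1 + γ)) :=
      mul_lt_mul_of_pos_right hlt (rpow_pos_of_pos hρ _)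
    _ = _ := by ring

lemma lt_mul_rpow_of_root {k₀ k₁ c ρ : ℝ} (hγ : 0 < γ) (hk₀ : 0 < k₀)
    (hroot : k₀ * ρ ^ (γ + 1) - k₁ * ρ ^ ((1 + 2 * γ) / (1 + γ)) + γ / (1 + 2 * γ) * k₀ * c = 0)
    (hlt : (1 + 2 * γ) * k₁ * ρ ^ ((1 + 2 * γ) / (1 + γ)) < (γ + 1) ^ 2 * k₀ * ρ ^ (γ + 1)) :
    c < γ * ρ ^ (γ + 1) := by
  have hsubst : (1 + 2 * γ) * k₁ * ρ ^ ((1 + 2 * γ) / (1 + γ))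
      = (1 + 2 * γ) * k₀ * ρ ^ (γ + 1) + γ * k₀ * c := by
    have h : (1 + 2 * γ) * (γ / (1 + 2 * γ)) = γ := by field_simp
    linear_combination (-(1 + 2 * γ)) * hroot + k₀ * c * h
  refine lt_of_mul_lt_mul_left (a := γ * k₀) ?_ (by positivity)
  linear_combination hlt - hsubst

end StationaryContact

theorem stmt_8_general (γ u₀ ρ₀ a₀ a : ℝ) (hγ : 0 < γ)
    (hu₀ : 0 < u₀) (hρ₀ : 0 < ρ₀) (ha₀ : 0 < a₀) (ha : 0 < a)
    (k₀ k₁ k₂ : ℝ)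
    (hk₀ : k₀ = (a₀ * ρ₀ * u₀ / a) ^ (γ / (1 + γ)))
    (hk₂ : k₂ = (γ / (1 + 2 * γ)) * (a₀ * ρ₀ * u₀ / a) ^ ((1 + 2 * γ) / (1 + γ)))
    (ρ : ℝ) (hρ : 0 < ρ)
    (hroot : k₀ * ρ ^ (γ + 1) - k₁ * ρ ^ ((1 + 2 * γ) / (1 + γ)) + k₂ = 0)
    (hgt : (k₁ * (1 + 2 * γ) / (k₀ * (γ + 1) ^ 2)) ^ ((1 + γ) / γ ^ 2) < ρ)
    (u : ℝ) (hu : u = a₀ * ρ₀ * u₀ / (a * ρ)) :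
    u < γ * ρ ^ γ := by
  set c := a₀ * ρ₀ * u₀ / a with hc_def
  have hc : 0 < c := by positivity
  have hk₀_pos : 0 < k₀ := hk₀ ▸ rpow_pos_of_pos hc _
  have hk₂_eq : k₂ = γ / (1 + 2 * γ) * k₀ * c := by
    rw [hk₂, hk₀, rpow_one_add_two_mul_div hc (by positivity), mul_assoc]
  have hk₁_pos : 0 < k₁ := by
    have : 0 < k₁ * ρ ^ ((1 + 2 * γ) / (1 + γ)) := by
      have : 0 < k₂ := by rw [hk₂_eq]; positivity
      nlinarith [rpow_pos_of_pos hρ (γ + 1)]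
    exact pos_of_mul_pos_left this (rpow_pos_of_pos hρ _).le
  have hc_lt : c < γ * ρ ^ (γ + 1) := lt_mul_rpow_of_root hγ hk₀_pos (hk₂_eq ▸ hroot)
    (mul_rpow_lt_of_rhoMin_lt hγ hρ hk₀_pos hk₁_pos hgt)
  rwa [hu, ← div_div, ← hc_def, div_lt_iff₀ hρ, mul_assoc, ← rpow_add_one hρ.ne']

/-- A root ρ of the stationary-contact equation with ρ > ρ_min gives a state in
the subsonic region D₁: the velocity u = a₀ρ₀u₀/(aρ) satisfies u < γρ^γ. -/
theorem stmt_8 (γ u₀ ρ₀ a₀ a : ℝ) (hγ : 0 < γ)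
    (hu₀ : 0 < u₀) (hρ₀ : 0 < ρ₀) (ha₀ : 0 < a₀) (ha : 0 < a)
    (k₀ k₁ k₂ : ℝ)
    (hk₀ : k₀ = (a₀ * ρ₀ * u₀ / a) ^ (γ / (1 + γ)))
    (hk₁ : k₁ = u₀ ^ (γ / (1 + γ)) * (ρ₀ ^ γ + (γ / (1 + 2 * γ)) * u₀))
    (hk₂ : k₂ = (γ / (1 + 2 * γ)) * (a₀ * ρ₀ * u₀ / a) ^ ((1 + 2 * γ) / (1 + γ)))
    (ρ : ℝ) (hρ : 0 < ρ)
    (hroot : k₀ * ρ ^ (γ + 1) - k₁ * ρ ^ ((1 + 2 * γ) / (1 + γ)) + k₂ = 0)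
    (hgt : (k₁ * (1 + 2 * γ) / (k₀ * (γ + 1) ^ 2)) ^ ((1 + γ) / γ ^ 2) < ρ)
    (u : ℝ) (hu : u = a₀ * ρ₀ * u₀ / (a * ρ)) :
    u < γ * ρ ^ γ :=
  stmt_8_general γ u₀ ρ₀ a₀ a hγ hu₀ hρ₀ ha₀ ha k₀ k₁ k₂ hk₀ hk₂ ρ hρ hroot hgt u hu
end

section
/- Let γ > 0 and fix (u₀, ρ₀) with ρ₀, u₀ > 0. Along the shock curve u(ρ) = u₀ + ρ₀^γ - ρ^γ for ρ > ρ₀, the shock speed σ(ρ) = u(ρ) + ρ₀(ρ₀^γ - ρ^γ)/(ρ - ρ₀) equals u₀ + ρ(ρ₀^γ - ρ^γ)/(ρ - ρ₀), and σ(ρ) = 0 for some ρ > ρ₀ if and only if u₀ = ρ(ρ^γ - ρ₀^γ)/(ρ - ρ₀) > γρ₀^γ; in particular, if 0 < u₀ ≤ γρ₀^γ (state in the closure of D₁) then σ(ρ) < 0 for all ρ > ρ₀. -/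
open Real

/-!
Clearing the denominator, the shock speed is `σ(ρ) = u₀ - s(ρ)` with
`s(ρ) = ρ (ρ^γ - ρ₀^γ) / (ρ - ρ₀)`, so `σ(ρ) = 0` iff `u₀ = s(ρ)`. Writing `t = ρ / ρ₀ > 1`,
the bound `s(ρ) > γ ρ₀^γ` becomes `t^γ - 1 > γ (1 - t⁻¹)`, which follows from
`t^γ = exp (γ log t) > 1 + γ log t` and `log t ≥ 1 - t⁻¹`.
-/

lemma mul_one_sub_inv_lt_rpow_sub_one {γ t : ℝ} (hγ : 0 < γ) (ht : 1 < t) :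
    γ * (1 - t⁻¹) < t ^ γ - 1 := by
  have hlog : 0 < γ * log t := mul_pos hγ (log_pos ht)
  calc γ * (1 - t⁻¹) ≤ γ * log t :=
        mul_le_mul_of_nonneg_left (one_sub_inv_le_log_of_pos (by linarith)) hγ.le
    _ < exp (γ * log t) - 1 := by linarith [add_one_lt_exp hlog.ne']
    _ = t ^ γ - 1 := by rw [rpow_def_of_pos (by linarith), mul_comm]

lemma mul_rpow_lt_mul_rpow_sub_div {γ ρ₀ ρ : ℝ} (hγ : 0 < γ) (hρ₀ : 0 < ρ₀) (hρ : ρ₀ < ρ) :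
    γ * ρ₀ ^ γ < ρ * (ρ ^ γ - ρ₀ ^ γ) / (ρ - ρ₀) := by
  have hpos : 0 < ρ := hρ₀.trans hρ
  have ht : 1 < ρ / ρ₀ := (one_lt_div hρ₀).2 hρ
  have hρ_pow : ρ ^ γ = (ρ / ρ₀) ^ γ * ρ₀ ^ γ := by
    rw [← mul_rpow (div_pos hpos hρ₀).le hρ₀.le, div_mul_cancel₀ _ hρ₀.ne']
  have hscaled : γ * (ρ - ρ₀) < ρ * ((ρ / ρ₀) ^ γ - 1) := by
    have h := mul_lt_mul_of_pos_left (mul_one_sub_inv_lt_rpow_sub_one hγ ht) hpos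
    rwa [inv_div, mul_left_comm, mul_sub, mul_one, mul_div_cancel₀ _ hpos.ne'] at h
  rw [lt_div_iff₀ (by linarith), hρ_pow]
  nlinarith [mul_lt_mul_of_pos_right hscaled (rpow_pos_of_pos hρ₀ γ)]

lemma add_sub_add_mul_sub_div_eq {u₀ a b ρ₀ ρ : ℝ} (hρ : ρ ≠ ρ₀) :
    (u₀ + a - b) + ρ₀ * (a - b) / (ρ - ρ₀) = u₀ - ρ * (b - a) / (ρ - ρ₀) := by
  field_simp [sub_ne_zero.2 hρ]
  ring

theorem stmt_10_general (γ u₀ ρ₀ : ℝ) (hγ : 0 < γ) (hρ₀ : 0 < ρ₀) :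
    (∀ ρ : ℝ, ρ₀ < ρ →
      ((u₀ + ρ₀ ^ γ - ρ ^ γ) + ρ₀ * (ρ₀ ^ γ - ρ ^ γ) / (ρ - ρ₀)
          = u₀ + ρ * (ρ₀ ^ γ - ρ ^ γ) / (ρ - ρ₀)) ∧
      ((u₀ + ρ₀ ^ γ - ρ ^ γ) + ρ₀ * (ρ₀ ^ γ - ρ ^ γ) / (ρ - ρ₀) = 0
          ↔ u₀ = ρ * (ρ ^ γ - ρ₀ ^ γ) / (ρ - ρ₀)) ∧
      ((u₀ + ρ₀ ^ γ - ρ ^ γ) + ρ₀ * (ρ₀ ^ γ - ρ ^ γ) / (ρ - ρ₀) = 0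
          → γ * ρ₀ ^ γ < u₀)) ∧
    (u₀ ≤ γ * ρ₀ ^ γ → ∀ ρ : ℝ, ρ₀ < ρ →
      (u₀ + ρ₀ ^ γ - ρ ^ γ) + ρ₀ * (ρ₀ ^ γ - ρ ^ γ) / (ρ - ρ₀) < 0) := by
  have hσ : ∀ ρ, ρ₀ < ρ → (u₀ + ρ₀ ^ γ - ρ ^ γ) + ρ₀ * (ρ₀ ^ γ - ρ ^ γ) / (ρ - ρ₀)
      = u₀ - ρ * (ρ ^ γ - ρ₀ ^ γ) / (ρ - ρ₀) :=
    fun ρ hρ => add_sub_add_mul_sub_div_eq hρ.ne'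
  refine ⟨fun ρ hρ => ⟨?_, ?_, fun h => ?_⟩, fun hle ρ hρ => ?_⟩
  · rw [hσ ρ hρ]
    ring
  · rw [hσ ρ hρ, sub_eq_zero]
  · rw [hσ ρ hρ, sub_eq_zero] at h
    exact h ▸ mul_rpow_lt_mul_rpow_sub_div hγ hρ₀ hρ
  · rw [hσ ρ hρ, sub_neg]
    exact hle.trans_lt (mul_rpow_lt_mul_rpow_sub_div hγ hρ₀ hρ)

/-- Along the shock curve u(ρ) = u₀ + ρ₀^γ - ρ^γ (ρ > ρ₀), the shock speed
σ(ρ) = u(ρ) + ρ₀(ρ₀^γ-ρ^γ)/(ρ-ρ₀) equals u₀ + ρ(ρ₀^γ-ρ^γ)/(ρ-ρ₀); it vanishes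
iff u₀ = ρ(ρ^γ-ρ₀^γ)/(ρ-ρ₀), in which case u₀ > γρ₀^γ; and if 0 < u₀ ≤ γρ₀^γ
then σ(ρ) < 0 for all ρ > ρ₀. -/
theorem stmt_10 (γ u₀ ρ₀ : ℝ) (hγ : 0 < γ) (hu₀ : 0 < u₀) (hρ₀ : 0 < ρ₀) :
    (∀ ρ : ℝ, ρ₀ < ρ →
      ((u₀ + ρ₀ ^ γ - ρ ^ γ) + ρ₀ * (ρ₀ ^ γ - ρ ^ γ) / (ρ - ρ₀)
          = u₀ + ρ * (ρ₀ ^ γ - ρ ^ γ) / (ρ - ρ₀)) ∧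
      ((u₀ + ρ₀ ^ γ - ρ ^ γ) + ρ₀ * (ρ₀ ^ γ - ρ ^ γ) / (ρ - ρ₀) = 0
          ↔ u₀ = ρ * (ρ ^ γ - ρ₀ ^ γ) / (ρ - ρ₀)) ∧
      ((u₀ + ρ₀ ^ γ - ρ ^ γ) + ρ₀ * (ρ₀ ^ γ - ρ ^ γ) / (ρ - ρ₀) = 0
          → γ * ρ₀ ^ γ < u₀)) ∧
    (u₀ ≤ γ * ρ₀ ^ γ → ∀ ρ : ℝ, ρ₀ < ρ →
      (u₀ + ρ₀ ^ γ - ρ ^ γ) + ρ₀ * (ρ₀ ^ γ - ρ ^ γ) / (ρ - ρ₀) < 0) :=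
  stmt_10_general γ u₀ ρ₀ hγ hρ₀
end

section
/- Let γ > 0 and ρ₀ > 0. If U₀ = (u₀, ρ₀) lies strictly in D₂ = {u > γρ^γ}, i.e., u₀ > γρ₀^γ, then the function g(ρ) = u₀ - ρ(ρ^γ - ρ₀^γ)/(ρ - ρ₀), defined for ρ > ρ₀, is continuous and strictly decreasing, with g(ρ) → u₀ - γρ₀^γ > 0 as ρ → ρ₀⁺ and g(ρ) → -∞ as ρ → ∞; hence there exists a unique ρ̃ > ρ₀ with g(ρ̃) = 0, i.e., the shock speed along the shock curve vanishes at exactly one point. -/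
open Real Set Filter

private lemma key_ineq (γ ρ₀ x : ℝ) (hγ : 0 < γ) (hρ₀ : 0 < ρ₀) (hx : ρ₀ < x) :
    x * (x ^ γ - ρ₀ ^ γ) <
      (1 * (x ^ γ - ρ₀ ^ γ) + x * (γ * x ^ (γ - 1))) * (x - ρ₀) := by
  have hx0 : (0:ℝ) < x := hρ₀.trans hx
  have hA : (0:ℝ) < x ^ γ := Real.rpow_pos_of_pos hx0 γ
  have hB : (0:ℝ) < ρ₀ ^ γ := Real.rpow_pos_of_pos hρ₀ γ
  have hxg : x * (γ * x ^ (γ - 1)) = γ * x ^ γ := by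
    have h1 : x ^ (γ - 1 + 1) = x ^ (γ - 1) * x := Real.rpow_add_one hx0.ne' _
    have h2 : γ - 1 + 1 = γ := by ring
    rw [h2] at h1
    rw [h1]; ring
  rw [hxg]
  set s : ℝ := ρ₀ / x - 1 with hs
  have hs1 : (0:ℝ) < 1 + s := by simp [hs]; positivity
  have hsneg : s ≠ 0 := by
    have : ρ₀ / x < 1 := (div_lt_one hx0).2 hx
    simp [hs]; intro h; nlinarith [this]
  have hb := one_add_mul_self_lt_rpow_one_add (by nlinarith : (-1:ℝ) ≤ s) hsneg
    (by linarith : (1:ℝ) < γ + 1)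
  have h1s : 1 + s = ρ₀ / x := by simp [hs]
  rw [h1s] at hb
  have hdiv : (ρ₀ / x) ^ (γ + 1) = (ρ₀ ^ γ * ρ₀) / (x ^ γ * x) := by
    rw [Real.div_rpow hρ₀.le hx0.le, Real.rpow_add_one hρ₀.ne', Real.rpow_add_one hx0.ne']
  rw [hdiv] at hb
  have hAx : (0:ℝ) < x ^ γ * x := by positivity
  have hb2 : (1 + (γ + 1) * s) * (x ^ γ * x) < ρ₀ ^ γ * ρ₀ := by
    calc (1 + (γ + 1) * s) * (x ^ γ * x) < (ρ₀ ^ γ * ρ₀ / (x ^ γ * x)) * (x ^ γ * x) :=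
          mul_lt_mul_of_pos_right hb hAx
      _ = ρ₀ ^ γ * ρ₀ := div_mul_cancel₀ _ hAx.ne'
  have hsx : s * x = ρ₀ - x := by rw [hs, sub_mul, div_mul_cancel₀ _ hx0.ne', one_mul]
  have hexp : (1 + (γ + 1) * s) * (x ^ γ * x) = x ^ γ * x + (γ + 1) * (ρ₀ - x) * x ^ γ := by
    rw [← hsx]; ring
  rw [hexp] at hb2
  nlinarith [hb2]

/-- For a left state in D₂ (u₀ > γρ₀^γ), the function
g(ρ) = u₀ - ρ(ρ^γ-ρ₀^γ)/(ρ-ρ₀) on (ρ₀,∞) is continuous and strictly decreasing,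
tends to u₀ - γρ₀^γ > 0 as ρ → ρ₀⁺ and to -∞ as ρ → ∞, hence has a unique zero
ρ̃ > ρ₀; i.e. the shock speed vanishes at exactly one point of the shock curve. -/
theorem stmt_12 (γ u₀ ρ₀ : ℝ) (hγ : 0 < γ) (hρ₀ : 0 < ρ₀)
    (hu₀ : γ * ρ₀ ^ γ < u₀)
    (g : ℝ → ℝ) (hg : ∀ ρ : ℝ, g ρ = u₀ - ρ * (ρ ^ γ - ρ₀ ^ γ) / (ρ - ρ₀)) :
    StrictAntiOn g (Ioi ρ₀) ∧
    ContinuousOn g (Ioi ρ₀) ∧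
    Tendsto g (nhdsWithin ρ₀ (Ioi ρ₀)) (nhds (u₀ - γ * ρ₀ ^ γ)) ∧
    0 < u₀ - γ * ρ₀ ^ γ ∧
    Tendsto g atTop atBot ∧
    (∃! ρt : ℝ, ρ₀ < ρt ∧ g ρt = 0) := by
  obtain rfl : g = fun ρ => u₀ - ρ * (ρ ^ γ - ρ₀ ^ γ) / (ρ - ρ₀) := funext hg
  set g : ℝ → ℝ := fun ρ => u₀ - ρ * (ρ ^ γ - ρ₀ ^ γ) / (ρ - ρ₀) with hgdef
  -- derivative
  have hderiv : ∀ x ∈ Ioi ρ₀, HasDerivAt g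
      (-(((1 * (x ^ γ - ρ₀ ^ γ) + x * (γ * x ^ (γ - 1))) * (x - ρ₀)
          - x * (x ^ γ - ρ₀ ^ γ) * 1) / (x - ρ₀) ^ 2)) x := by
    intro x hx
    have hx0 : (0:ℝ) < x := hρ₀.trans hx
    have hd0 : x - ρ₀ ≠ 0 := sub_ne_zero.2 (ne_of_gt hx)
    have hn : HasDerivAt (fun ρ : ℝ => ρ * (ρ ^ γ - ρ₀ ^ γ))
        (1 * (x ^ γ - ρ₀ ^ γ) + x * (γ * x ^ (γ - 1))) x :=
      (hasDerivAt_id x).mul ((Real.hasDerivAt_rpow_const (Or.inl hx0.ne')).sub_const _)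
    have hd : HasDerivAt (fun ρ : ℝ => ρ - ρ₀) 1 x := (hasDerivAt_id x).sub_const _
    exact ((hn.div hd hd0)).const_sub u₀
  have hderivneg : ∀ x ∈ Ioi ρ₀, deriv g x < 0 := by
    intro x hx
    rw [(hderiv x hx).deriv]
    have hd0 : (0:ℝ) < (x - ρ₀) ^ 2 := pow_pos (sub_pos.2 hx) 2
    have := key_ineq γ ρ₀ x hγ hρ₀ hx
    have hnum : 0 < ((1 * (x ^ γ - ρ₀ ^ γ) + x * (γ * x ^ (γ - 1))) * (x - ρ₀)
        - x * (x ^ γ - ρ₀ ^ γ) * 1) / (x - ρ₀) ^ 2 := by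
      apply div_pos _ hd0
      nlinarith [this]
    linarith
  have hcont : ContinuousOn g (Ioi ρ₀) := fun x hx =>
    ((hderiv x hx).differentiableAt.continuousAt).continuousWithinAt
  have hanti : StrictAntiOn g (Ioi ρ₀) := by
    apply strictAntiOn_of_deriv_neg (convex_Ioi ρ₀) hcont
    rwa [interior_Ioi]
  -- limit at ρ₀⁺
  have hpos : 0 < u₀ - γ * ρ₀ ^ γ := by linarith
  have hlim : Tendsto g (nhdsWithin ρ₀ (Ioi ρ₀)) (nhds (u₀ - γ * ρ₀ ^ γ)) := by
    have hd : HasDerivAt (fun ρ : ℝ => ρ ^ γ) (γ * ρ₀ ^ (γ - 1)) ρ₀ :=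
      Real.hasDerivAt_rpow_const (Or.inl hρ₀.ne')
    have hslope : Tendsto (slope (fun ρ : ℝ => ρ ^ γ) ρ₀) (nhdsWithin ρ₀ (Ioi ρ₀))
        (nhds (γ * ρ₀ ^ (γ - 1))) :=
      (hasDerivAt_iff_tendsto_slope.mp hd).mono_left
        (nhdsWithin_mono ρ₀ (fun x hx => ne_of_gt hx))
    have hid : Tendsto (fun ρ : ℝ => ρ) (nhdsWithin ρ₀ (Ioi ρ₀)) (nhds ρ₀) :=
      tendsto_id.mono_left nhdsWithin_le_nhds
    have hmul : Tendsto (fun ρ : ℝ => u₀ - ρ * slope (fun ρ : ℝ => ρ ^ γ) ρ₀ ρ)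
        (nhdsWithin ρ₀ (Ioi ρ₀)) (nhds (u₀ - ρ₀ * (γ * ρ₀ ^ (γ - 1)))) :=
      tendsto_const_nhds.sub (hid.mul hslope)
    have heq : ρ₀ * (γ * ρ₀ ^ (γ - 1)) = γ * ρ₀ ^ γ := by
      have h1 : ρ₀ ^ (γ - 1 + 1) = ρ₀ ^ (γ - 1) * ρ₀ := Real.rpow_add_one hρ₀.ne' _
      have h2 : γ - 1 + 1 = γ := by ring
      rw [h2] at h1
      rw [h1]; ring
    rw [heq] at hmul
    refine hmul.congr' ?_
    filter_upwards [self_mem_nhdsWithin] with ρ hρ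
    have hρ0 : ρ - ρ₀ ≠ 0 := sub_ne_zero.2 (ne_of_gt hρ)
    simp only [slope_def_field, hgdef]
    field_simp
  -- tendsto atBot
  have hbot : Tendsto g atTop atBot := by
    have h1 : Tendsto (fun ρ : ℝ => u₀ - (ρ ^ γ - ρ₀ ^ γ)) atTop atBot := by
      have h2 : Tendsto (fun ρ : ℝ => ρ ^ γ - ρ₀ ^ γ) atTop atTop :=
        tendsto_atTop_add_const_right _ (-ρ₀ ^ γ) (tendsto_rpow_atTop hγ) |>.congr
          (fun x => by ring)
      have h3 := tendsto_neg_atTop_atBot.comp h2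
      have h4 := tendsto_atBot_add_const_left _ u₀ h3
      exact h4.congr (fun x => by simp [Function.comp]; ring)
    apply tendsto_atBot_mono' atTop _ h1
    filter_upwards [eventually_ge_atTop (ρ₀ + 1)] with ρ hρ
    have hρρ₀ : ρ₀ < ρ := by linarith
    have hρ0 : (0:ℝ) < ρ := hρ₀.trans hρρ₀
    have hdpos : (0:ℝ) < ρ - ρ₀ := by linarith
    have hγpos : 0 ≤ ρ ^ γ - ρ₀ ^ γ := by
      have := Real.rpow_le_rpow hρ₀.le hρρ₀.le hγ.le
      linarith
    have : (ρ ^ γ - ρ₀ ^ γ) ≤ ρ * (ρ ^ γ - ρ₀ ^ γ) / (ρ - ρ₀) := by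
      rw [le_div_iff₀ hdpos]
      nlinarith
    simp only [hgdef]
    linarith
  refine ⟨hanti, hcont, hlim, hpos, hbot, ?_⟩
  -- existence and uniqueness of the zero
  have hev : ∀ᶠ ρ in nhdsWithin ρ₀ (Ioi ρ₀), 0 < g ρ :=
    hlim.eventually (eventually_gt_nhds hpos)
  obtain ⟨a, hga, ha⟩ := (hev.and self_mem_nhdsWithin).exists
  obtain ⟨b, hb1, hb2⟩ := ((hbot.eventually (eventually_lt_atBot 0)).and
    (eventually_ge_atTop a)).exists
  have hab : a ≤ b := hb2
  have haρ₀ : ρ₀ < a := ha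
  have hIcc : Icc a b ⊆ Ioi ρ₀ := fun x hx => lt_of_lt_of_le haρ₀ hx.1
  have h0mem : (0:ℝ) ∈ Icc (g b) (g a) := ⟨hb1.le, hga.le⟩
  obtain ⟨ρt, hρtmem, hρt0⟩ := intermediate_value_Icc' hab (hcont.mono hIcc) h0mem
  refine ⟨ρt, ⟨hIcc hρtmem, hρt0⟩, ?_⟩
  rintro y ⟨hy1, hy2⟩
  exact hanti.injOn hy1 (hIcc hρtmem) (by rw [hy2, hρt0])
end

section
/- Let γ > 0 and let c > 1, c₁ ∈ (0,1) satisfy the implicit relation c^{γ/(γ+1)} - (cγ+1)c₁^{γ/(γ+1)} + γc^{γ/(γ+1)}c₁ = 0. Then differentiating this relation gives dc·dc₁ < 0; that is, c₁ is a strictly decreasing function of c: the coefficient (γ/(γ+1))c^{-1/(γ+1)}(1+γc₁) - γc₁^{γ/(γ+1)} of dc is negative and the coefficient (γ/(γ+1))(cγ+1)c₁^{-1/(γ+1)} - γc^{γ/(γ+1)} of dc₁ is positive. -/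
/-!
With `A = c ^ (γ/(γ+1))` and `B = c₁ ^ (γ/(γ+1))` the relation reads `A (1 + γ c₁) = (1 + γ c) B`.
Since `x ^ (-1/(γ+1)) = x ^ (γ/(γ+1)) / x`, eliminating with the relation turns the coefficient
of `dc` into `B f(c)` and that of `dc₁` into `A f(c₁)`, where
`f(x) = (γ/(γ+1)) (1 + γ x) / x - γ = γ (1 - x) / ((γ+1) x)` has the sign of `1 - x`.
-/

open Real

lemma rpow_neg_one_div_add_one {x : ℝ} (hx : 0 < x) {γ : ℝ} (hγ : γ + 1 ≠ 0) :
    x ^ (-(1 / (γ + 1))) = x ^ (γ / (γ + 1)) / x := by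
  rw [← rpow_sub_one hx.ne']
  congr 1
  field_simp
  ring

lemma shock_factor_eq {γ x : ℝ} (hγ : γ + 1 ≠ 0) (hx : x ≠ 0) :
    γ / (γ + 1) * (1 + γ * x) / x - γ = γ * (1 - x) / ((γ + 1) * x) := by
  field_simp
  ring

lemma shock_factor_neg {γ x : ℝ} (hγ : 0 < γ) (hx : 1 < x) :
    γ / (γ + 1) * (1 + γ * x) / x - γ < 0 := by
  rw [shock_factor_eq (by positivity) (by positivity)]
  exact div_neg_of_neg_of_pos (mul_neg_of_pos_of_neg hγ (by linarith)) (by positivity)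

lemma shock_factor_pos {γ x : ℝ} (hγ : 0 < γ) (hx0 : 0 < x) (hx1 : x < 1) :
    0 < γ / (γ + 1) * (1 + γ * x) / x - γ := by
  rw [shock_factor_eq (by positivity) hx0.ne']
  exact div_pos (mul_pos hγ (by linarith)) (by positivity)

/-- Along the zero-speed shock relation c^{γ/(γ+1)} - (cγ+1)c₁^{γ/(γ+1)}
+ γc^{γ/(γ+1)}c₁ = 0 with c > 1, 0 < c₁ < 1, the coefficient of dc is negative
and the coefficient of dc₁ is positive, so dc·dc₁ < 0 (c₁ strictly decreases in c). -/
theorem stmt_15 (γ c c₁ : ℝ) (hγ : 0 < γ) (hc : 1 < c)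
    (hc₁0 : 0 < c₁) (hc₁1 : c₁ < 1)
    (hrel : c ^ (γ / (γ + 1)) - (c * γ + 1) * c₁ ^ (γ / (γ + 1))
        + γ * c ^ (γ / (γ + 1)) * c₁ = 0) :
    (γ / (γ + 1)) * c ^ (-(1 / (γ + 1))) * (1 + γ * c₁)
        - γ * c₁ ^ (γ / (γ + 1)) < 0 ∧
    0 < (γ / (γ + 1)) * (c * γ + 1) * c₁ ^ (-(1 / (γ + 1)))
        - γ * c ^ (γ / (γ + 1)) := by
  have hc0 : 0 < c := one_pos.trans hc
  have hγ1 : γ + 1 ≠ 0 := by positivity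
  rw [rpow_neg_one_div_add_one hc0 hγ1, rpow_neg_one_div_add_one hc₁0 hγ1]
  set A := c ^ (γ / (γ + 1))
  set B := c₁ ^ (γ / (γ + 1))
  have hrel' : A * (1 + γ * c₁) = (1 + γ * c) * B := by linear_combination hrel
  have hcoeff_c : γ / (γ + 1) * (A / c) * (1 + γ * c₁) - γ * B
      = B * (γ / (γ + 1) * (1 + γ * c) / c - γ) := by
    linear_combination γ / (γ + 1) / c * hrel'
  have hcoeff_c₁ : γ / (γ + 1) * (c * γ + 1) * (B / c₁) - γ * A
      = A * (γ / (γ + 1) * (1 + γ * c₁) / c₁ - γ) := by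
    linear_combination -(γ / (γ + 1) / c₁) * hrel'
  rw [hcoeff_c, hcoeff_c₁]
  exact ⟨mul_neg_of_pos_of_neg (by positivity) (shock_factor_neg hγ hc),
    mul_pos (by positivity) (shock_factor_pos hγ hc₁0 hc₁1)⟩
end

section
/- The matrix pair (A, B) with A = [[0, a, 0],[a, aγρ^{γ-1}, 0],[0,0,1]] and B = [[aρ, au, ρu],[au, auγρ^{γ-1}, -uρ^γ],[0,0,0]] (with a, ρ > 0) has generalized eigenvalues λ₁ = u - γρ^γ, λ₂ = u, λ₃ = 0; i.e., det(B - λA) = 0 exactly for λ ∈ {u - γρ^γ, u, 0}. -/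
open Real Matrix

/-!
The last row of `B - λA` is `(0, 0, -λ)`, so `det (B - λA)` is `-λ` times the upper-left
`2 × 2` minor, which factors as `-a² (u - λ) (u - γρ^γ - λ)` once `ρ · ρ^(γ-1) = ρ^γ` is used.
-/

-- `p` and `q` stand for `ρ ^ (γ - 1)` and `ρ ^ γ`, making the determinant a polynomial identity.
theorem det_trafficPencil {a ρ u γ p q : ℝ} (hpq : ρ * p = q) (lam : ℝ) :
    ((!![a * ρ, a * u, ρ * u;
         a * u, a * u * γ * p, -(u * q);
         0, 0, 0] : Matrix (Fin 3) (Fin 3) ℝ)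
      - lam • (!![0, a, 0;
                  a, a * γ * p, 0;
                  0, 0, 1] : Matrix (Fin 3) (Fin 3) ℝ)).det
      = a ^ 2 * (lam * ((u - lam) * ((u - γ * q) - lam))) := by
  subst hpq
  simp only [det_fin_three, Matrix.sub_apply, Matrix.smul_apply, of_apply, cons_val',
    cons_val_zero, cons_val_one, cons_val_two, head_cons, tail_cons, empty_val',
    cons_val_fin_one, head_fin_const, smul_eq_mul]
  ring

theorem sq_mul_mul_mul_eq_zero_iff {a c u lam : ℝ} (ha : a ≠ 0) :
    a ^ 2 * (lam * ((u - lam) * (c - lam))) = 0 ↔ lam = c ∨ lam = u ∨ lam = 0 := by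
  simp only [mul_eq_zero, pow_eq_zero_iff two_ne_zero, ha, sub_eq_zero, false_or]
  tauto

theorem stmt_16_general (γ a ρ u : ℝ) (ha : 0 < a) (hρ : 0 < ρ) :
    ∀ lam : ℝ,
      ((!![a * ρ, a * u, ρ * u;
           a * u, a * u * γ * ρ ^ (γ - 1), -(u * ρ ^ γ);
           0, 0, 0] : Matrix (Fin 3) (Fin 3) ℝ)
        - lam • (!![0, a, 0;
                    a, a * γ * ρ ^ (γ - 1), 0;
                    0, 0, 1] : Matrix (Fin 3) (Fin 3) ℝ)).det = 0
      ↔ lam = u - γ * ρ ^ γ ∨ lam = u ∨ lam = 0 := by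
  intro lam
  have hpow : ρ * ρ ^ (γ - 1) = ρ ^ γ := by
    rw [rpow_sub_one hρ.ne', mul_div_cancel₀ _ hρ.ne']
  rw [det_trafficPencil hpow]
  exact sq_mul_mul_mul_eq_zero_iff ha.ne'

/-- The generalized eigenvalues of the pair (A,B) of coefficient matrices of
the quasilinear traffic-flow system are λ₁ = u - γρ^γ, λ₂ = u, λ₃ = 0:
det(B - λA) = 0 exactly for these λ. -/
theorem stmt_16 (γ a ρ u : ℝ) (hγ : 0 < γ) (ha : 0 < a) (hρ : 0 < ρ)
    (hu : 0 < u) :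
    ∀ lam : ℝ,
      ((!![a * ρ, a * u, ρ * u;
           a * u, a * u * γ * ρ ^ (γ - 1), -(u * ρ ^ γ);
           0, 0, 0] : Matrix (Fin 3) (Fin 3) ℝ)
        - lam • (!![0, a, 0;
                    a, a * γ * ρ ^ (γ - 1), 0;
                    0, 0, 1] : Matrix (Fin 3) (Fin 3) ℝ)).det = 0
      ↔ lam = u - γ * ρ ^ γ ∨ lam = u ∨ lam = 0 :=
  stmt_16_general γ a ρ u ha hρ
end
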